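/- arXiv:2508.12947 — 7 statements merged into one kernel-verified Lean document; each statement's English description precedes it below -/
import Mathlib

section
/- Assume q ≥ 2 and ν(∅) = 0. Then the vector of Shapley values (φ_1,…,φ_q) is the unique minimizer of the weighted least squares objective ψ ↦ Σ_{∅ ≠ C ⊊ Q} w(C) · (ν(C) − Σ_{j ∈ C} ψ_j)² over all ψ ∈ ℝ^q satisfying the constraint Σ_{j=1}^q ψ_j = ν(Q). -/
open Finset

/-- Shapley value of player `j` for value function `ν` on coalitions of `Fin q`. -/
noncomputable def shapley {q : ℕ} (ν : Finset (Fin q) → ℝ) (j : Fin q) : ℝ :=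
  ((q : ℝ))⁻¹ * ∑ C ∈ (Finset.univ.erase j).powerset,
    (((q - 1).choose C.card : ℝ))⁻¹ * (ν (insert j C) - ν C)

/-- KernelSHAP weighted least squares objective over nonempty proper coalitions. -/
noncomputable def kernelObjective {q : ℕ} (ν : Finset (Fin q) → ℝ) (ψ : Fin q → ℝ) : ℝ :=
  ∑ C ∈ Finset.univ.powerset.filter
      (fun C : Finset (Fin q) => C.Nonempty ∧ C ≠ Finset.univ),
    (((q : ℝ) - 1) /
        ((q.choose C.card : ℝ) * (C.card : ℝ) * ((q : ℝ) - (C.card : ℝ)))) *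
      (ν C - ∑ j ∈ C, ψ j) ^ 2

/-!
Write a competitor as `φ + δ` with `φ` the Shapley vector and `∑ δ = 0`. The objective is
quadratic, so `L(φ + δ) = L(φ) - 2 ∑ⱼ gⱼ δⱼ + ∑_C w(C) (∑_{j ∈ C} δⱼ)²`, where
`gⱼ = ∑_{C ∋ j} w(C) (ν C - ∑_{i ∈ C} φᵢ)`. Pairing `D ∪ {j}` with `D ∪ {k}` for
`D ⊆ Q \ {j, k}` shows that `gⱼ - g_k` is `∑_D w(|D|+1) (ν(D ∪ {j}) - ν(D ∪ {k}))` minus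
`(φⱼ - φ_k) ∑_D w(|D|+1)`. The Shapley kernel satisfies `w(d+1) = 1 / (q·C(q-2,d))`, which is
`(q-1)/q` times the weight with which the same differences of `ν` make up `φⱼ - φ_k`, and
`∑_D w(|D|+1) = (q-1)/q`; so `g` is constant and the cross term vanishes. The remaining square
is positive for `δ ≠ 0` because singletons carry positive weight. That `φ` satisfies the
constraint is the efficiency of the Shapley value.
-/

section PowersetSums

variable {α : Type*} [Fintype α] [DecidableEq α]

theorem sum_powerset_univ_erase {M : Type*} [AddCommMonoid M] (f : Finset α → M) (j : α) :
    ∑ C ∈ (univ.erase j).powerset, f C = ∑ C with j ∉ C, f C := by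
  congr 1
  ext C
  simp [subset_erase]

theorem sum_powerset_univ_erase_insert {M : Type*} [AddCommMonoid M] (f : Finset α → M)
    (j : α) : ∑ C ∈ (univ.erase j).powerset, f (insert j C) = ∑ C with j ∈ C, f C := by
  refine sum_nbij' (insert j) (·.erase j) ?_ ?_ ?_ ?_ ?_ <;> intro C hC
  all_goals simp_all [subset_erase, insert_erase]

theorem sum_filter_mem_sub_sum_filter_mem {M : Type*} [AddCommGroup M] (f : Finset α → M)
    {j k : α} (hjk : j ≠ k) :
    ∑ C with j ∈ C, f C - ∑ C with k ∈ C, f C =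
      ∑ D ∈ ((univ.erase j).erase k).powerset, (f (insert j D) - f (insert k D)) := by
  set s := (univ.erase j).erase k
  have hjs : j ∉ s := by simp [s]
  have hks : k ∉ s := by simp [s]
  have hj : univ.erase j = insert k s := by simp [s, insert_erase, hjk.symm]
  have hk : univ.erase k = insert j s := by
    rw [show s = (univ.erase k).erase j from erase_right_comm, insert_erase (by simp [hjk])]
  rw [← sum_powerset_univ_erase_insert, ← sum_powerset_univ_erase_insert, hj, hk,
    sum_powerset_insert hks, sum_powerset_insert hjs, sum_sub_distrib]
  simp_rw [insert_comm j k]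
  abel

theorem sum_mul_sum_eq_sum_sum_filter_mem {R : Type*} [NonUnitalNonAssocSemiring R]
    (f : Finset α → R) (δ : α → R) :
    ∑ C, f C * ∑ j ∈ C, δ j = ∑ j, (∑ C with j ∈ C, f C) * δ j := by
  simp_rw [mul_sum, sum_mul]
  exact sum_comm' (by simp)

theorem sum_powerset_univ_erase_mul_sub {R : Type*} [Ring R] (p : ℕ → R)
    (v : Finset α → R) (j : α) :
    ∑ C ∈ (univ.erase j).powerset, p #C * (v (insert j C) - v C) =
      ∑ C with j ∈ C, (p (#C - 1) + p #C) * v C - ∑ C, p #C * v C := by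
  have hins : ∀ C ∈ (univ.erase j).powerset,
      p #C * v (insert j C) = p (#(insert j C) - 1) * v (insert j C) := by
    intro C hC
    rw [card_insert_of_notMem (by simpa [subset_erase] using hC), add_tsub_cancel_right]
  simp_rw [mul_sub, sum_sub_distrib]
  rw [sum_congr rfl hins, sum_powerset_univ_erase_insert (fun C => p (#C - 1) * v C),
    sum_powerset_univ_erase (fun C => p #C * v C),
    ← sum_filter_add_sum_filter_not univ (j ∈ ·) (fun C => p #C * v C)]
  simp_rw [add_mul, sum_add_distrib]
  abel

end PowersetSums

theorem sum_powerset_inv_choose_card {β K : Type*} [DivisionSemiring K] [CharZero K]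
    (s : Finset β) : ∑ D ∈ s.powerset, (((#s).choose #D : K))⁻¹ = #s + 1 := by
  have h : ∀ m ∈ range (#s + 1), (#s).choose m • (((#s).choose m : K))⁻¹ = 1 := fun m hm => by
    rw [nsmul_eq_mul, mul_inv_cancel₀ (Nat.cast_ne_zero.2
      (Nat.choose_ne_zero (Nat.lt_succ_iff.1 (mem_range.1 hm))))]
  rw [sum_powerset_apply_card (fun m => (((#s).choose m : K))⁻¹), sum_congr rfl h]
  simp

theorem card_univ_erase_erase {n : ℕ} {j k : Fin n} (hjk : j ≠ k) :
    #((univ.erase j).erase k) = n - 2 := by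
  rw [card_erase_of_mem (by simp [hjk.symm]), card_erase_of_mem (mem_univ j)]
  simp only [card_univ, Fintype.card_fin]
  omega

noncomputable def shapleyWeight (q c : ℕ) : ℝ := ((q : ℝ))⁻¹ * (((q - 1).choose c : ℝ))⁻¹

theorem shapleyWeight_add_shapleyWeight_succ {n d : ℕ} (hd : d ≤ n) :
    shapleyWeight (n + 2) d + shapleyWeight (n + 2) (d + 1) =
      ((n + 1) * n.choose d : ℝ)⁻¹ := by
  have h₁ := Nat.choose_mul_succ_eq n d
  have h₂ := Nat.add_one_mul_choose_eq n d
  rify [show d ≤ n + 1 by omega] at h₁ h₂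
  have := Nat.cast_ne_zero (R := ℝ).2 (Nat.choose_ne_zero hd)
  have := Nat.cast_ne_zero (R := ℝ).2 (Nat.choose_ne_zero (show d ≤ n + 1 by omega))
  have := Nat.cast_ne_zero (R := ℝ).2 (Nat.choose_ne_zero (show d + 1 ≤ n + 1 by omega))
  simp only [shapleyWeight]
  push_cast
  field_simp
  linear_combination ((n + 1).choose (d + 1) : ℝ) * h₁ + ((n + 1).choose d : ℝ) * h₂

theorem shapleyWeight_card_mul_sub {q c : ℕ} (h₁ : 1 ≤ c) (h₂ : c ≤ q) :
    c * (shapleyWeight q (c - 1) + shapleyWeight q c) - q * shapleyWeight q c =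
      if c = q then 1 else 0 := by
  obtain ⟨m, rfl⟩ : ∃ m, q = m + 1 := ⟨q - 1, by omega⟩
  obtain ⟨d, rfl⟩ : ∃ d, c = d + 1 := ⟨c - 1, by omega⟩
  simp only [shapleyWeight, Nat.add_sub_cancel, add_left_inj]
  split_ifs with h
  · subst h
    simp [Nat.choose_succ_self, Nat.cast_add_one_ne_zero]
  · have h' := Nat.choose_succ_right_eq m d
    rify [show d ≤ m by omega] at h'
    have := Nat.cast_ne_zero (R := ℝ).2 (Nat.choose_ne_zero (show d ≤ m by omega))
    have := Nat.cast_ne_zero (R := ℝ).2 (Nat.choose_ne_zero (show d + 1 ≤ m by omega))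
    push_cast
    field_simp
    linear_combination h'

theorem shapley_eq_sum_filter_mem_sub {q : ℕ} (ν : Finset (Fin q) → ℝ) (j : Fin q) :
    shapley ν j = ∑ C with j ∈ C, (shapleyWeight q (#C - 1) + shapleyWeight q #C) * ν C -
      ∑ C, shapleyWeight q #C * ν C := by
  rw [← sum_powerset_univ_erase_mul_sub, shapley, mul_sum]
  simp only [shapleyWeight, mul_assoc]

theorem sum_shapley {q : ℕ} (ν : Finset (Fin q) → ℝ) (hν : ν ∅ = 0) :
    ∑ j, shapley ν j = ν univ := by
  have hcount := sum_mul_sum_eq_sum_sum_filter_mem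
    (fun C => (shapleyWeight q (#C - 1) + shapleyWeight q #C) * ν C) (fun _ => (1 : ℝ))
  simp only [sum_const, nsmul_one, mul_one] at hcount
  have hcoeff : ∀ C : Finset (Fin q),
      (#C * (shapleyWeight q (#C - 1) + shapleyWeight q #C) - q * shapleyWeight q #C) * ν C =
        if C = univ then ν univ else 0 := by
    intro C
    rcases C.eq_empty_or_nonempty with rfl | hC
    · rw [hν, mul_zero]
      split_ifs with h
      · rw [← h, hν]
      · rfl
    · have hcard : #C = q ↔ C = univ := by simpa using card_eq_iff_eq_univ C
      rw [shapleyWeight_card_mul_sub hC.card_pos (by simpa using card_le_univ C)]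
      by_cases h : C = univ <;> simp [h, hcard]
  simp_rw [shapley_eq_sum_filter_mem_sub]
  rw [sum_sub_distrib, ← hcount, sum_const, card_univ, Fintype.card_fin, nsmul_eq_mul, mul_sum,
    ← sum_sub_distrib]
  calc _ = ∑ C : Finset (Fin q), if C = univ then ν univ else 0 :=
        sum_congr rfl fun C _ => by rw [← hcoeff]; ring
    _ = ν univ := by simp

theorem shapley_sub_shapley {n : ℕ} (ν : Finset (Fin (n + 2)) → ℝ) {j k : Fin (n + 2)}
    (hjk : j ≠ k) :
    shapley ν j - shapley ν k = ∑ D ∈ ((univ.erase j).erase k).powerset,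
      ((n + 1) * n.choose #D : ℝ)⁻¹ * (ν (insert j D) - ν (insert k D)) := by
  rw [shapley_eq_sum_filter_mem_sub, shapley_eq_sum_filter_mem_sub, sub_sub_sub_cancel_right,
    sum_filter_mem_sub_sum_filter_mem _ hjk]
  refine sum_congr rfl fun D hD => ?_
  have hDs := mem_powerset.1 hD
  have hj : j ∉ D := fun h => by simpa using hDs h
  have hk : k ∉ D := fun h => by simpa using hDs h
  have hcard : #D ≤ n := by simpa [card_univ_erase_erase hjk] using card_le_card hDs
  rw [card_insert_of_notMem hj, card_insert_of_notMem hk, add_tsub_cancel_right,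
    shapleyWeight_add_shapleyWeight_succ hcard, mul_sub]

noncomputable def shapleyKernel (q c : ℕ) : ℝ :=
  ((q : ℝ) - 1) / ((q.choose c : ℝ) * (c : ℝ) * ((q : ℝ) - (c : ℝ)))

theorem shapleyKernel_nonneg {q c : ℕ} (h : c ≤ q) : 0 ≤ shapleyKernel q c := by
  rcases Nat.eq_zero_or_pos c with rfl | hc
  · simp [shapleyKernel]
  have hq : (1 : ℝ) ≤ q := by exact_mod_cast hc.trans_le h
  have hcq : (c : ℝ) ≤ q := by exact_mod_cast h
  exact div_nonneg (by linarith) (mul_nonneg (by positivity) (by linarith))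

theorem shapleyKernel_succ {n d : ℕ} (hd : d ≤ n) :
    shapleyKernel (n + 2) (d + 1) = ((n + 2) * n.choose d : ℝ)⁻¹ := by
  have h₁ := Nat.choose_mul_succ_eq n d
  have h₂ := Nat.add_one_mul_choose_eq (n + 1) d
  rify [show d ≤ n + 1 by omega] at h₁ h₂
  have := Nat.cast_ne_zero (R := ℝ).2 (Nat.choose_ne_zero hd)
  have := Nat.cast_ne_zero (R := ℝ).2 (Nat.choose_ne_zero (show d + 1 ≤ n + 2 by omega))
  have : (n : ℝ) + 1 - d ≠ 0 := by
    have : (d : ℝ) ≤ n := by exact_mod_cast hd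
    linarith
  unfold shapleyKernel
  push_cast
  rw [show (n : ℝ) + 2 - (d + 1) = n + 1 - d by ring]
  field_simp
  linear_combination ((n : ℝ) + 2) * h₁ + ((n : ℝ) + 1 - d) * h₂

-- The paper's weight is infinite at `C = ∅` and `C = univ`; here the denominator vanishes and
-- `x / 0 = 0` lets those two coalitions, excluded from the objective, join the sum harmlessly.
theorem kernelObjective_eq_sum {q : ℕ} (ν : Finset (Fin q) → ℝ) (ψ : Fin q → ℝ) :
    kernelObjective ν ψ = ∑ C, shapleyKernel q #C * (ν C - ∑ j ∈ C, ψ j) ^ 2 := by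
  rw [kernelObjective, sum_filter, powerset_univ]
  refine sum_congr rfl fun C _ => ?_
  split_ifs with h
  · rfl
  · rcases not_and_or.1 h with h | h
    · simp [not_nonempty_iff_eq_empty.1 h, shapleyKernel]
    · simp [not_not.1 h, shapleyKernel]

/-- `-½ ∂(kernelObjective ν) / ∂(ψ j)`. -/
noncomputable def kernelGradient {q : ℕ} (ν : Finset (Fin q) → ℝ) (ψ : Fin q → ℝ)
    (j : Fin q) : ℝ :=
  ∑ C with j ∈ C, shapleyKernel q #C * (ν C - ∑ i ∈ C, ψ i)

theorem kernelObjective_add {q : ℕ} (ν : Finset (Fin q) → ℝ) (ψ δ : Fin q → ℝ) :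
    kernelObjective ν (ψ + δ) = kernelObjective ν ψ - 2 * ∑ j, kernelGradient ν ψ j * δ j +
      ∑ C, shapleyKernel q #C * (∑ j ∈ C, δ j) ^ 2 := by
  simp only [kernelObjective_eq_sum, kernelGradient]
  rw [← sum_mul_sum_eq_sum_sum_filter_mem, mul_sum, ← sum_sub_distrib, ← sum_add_distrib]
  refine sum_congr rfl fun C _ => ?_
  simp only [Pi.add_apply, sum_add_distrib]
  ring

theorem kernelGradient_shapley_eq {n : ℕ} (ν : Finset (Fin (n + 2)) → ℝ) (j k : Fin (n + 2)) :
    kernelGradient ν (shapley ν) j = kernelGradient ν (shapley ν) k := by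
  rcases eq_or_ne j k with rfl | hjk
  · rfl
  set s := (univ.erase j).erase k
  have hs : #s = n := card_univ_erase_erase hjk
  have hterm : ∀ D ∈ s.powerset,
      shapleyKernel (n + 2) #(insert j D) * (ν (insert j D) - ∑ i ∈ insert j D, shapley ν i) -
        shapleyKernel (n + 2) #(insert k D) * (ν (insert k D) - ∑ i ∈ insert k D, shapley ν i) =
      (n + 1) / (n + 2) * (((n + 1) * n.choose #D : ℝ)⁻¹ * (ν (insert j D) - ν (insert k D))) -
        (shapley ν j - shapley ν k) / (n + 2) * ((n.choose #D : ℝ))⁻¹ := by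
    intro D hD
    have hDs := mem_powerset.1 hD
    have hj : j ∉ D := fun h => by simpa [s] using hDs h
    have hk : k ∉ D := fun h => by simpa [s] using hDs h
    have hcard : #D ≤ n := (card_le_card hDs).trans hs.le
    have := Nat.cast_ne_zero (R := ℝ).2 (Nat.choose_ne_zero hcard)
    rw [card_insert_of_notMem hj, card_insert_of_notMem hk, sum_insert hj, sum_insert hk,
      shapleyKernel_succ hcard]
    field_simp
    ring
  have hsum : ∑ D ∈ s.powerset, ((n.choose #D : ℝ))⁻¹ = n + 1 := by
    simpa [hs] using sum_powerset_inv_choose_card (K := ℝ) s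
  rw [← sub_eq_zero, kernelGradient, kernelGradient, sum_filter_mem_sub_sum_filter_mem _ hjk,
    sum_congr rfl hterm, sum_sub_distrib, ← mul_sum, ← shapley_sub_shapley ν hjk, ← mul_sum,
    hsum]
  field_simp
  ring

theorem sum_shapleyKernel_mul_sq_pos {n : ℕ} {δ : Fin (n + 2) → ℝ} (hδ : δ ≠ 0) :
    0 < ∑ C, shapleyKernel (n + 2) #C * (∑ j ∈ C, δ j) ^ 2 := by
  obtain ⟨j, hj⟩ := Function.ne_iff.1 hδ
  have hsingle : 0 < shapleyKernel (n + 2) #{j} * (∑ i ∈ {j}, δ i) ^ 2 := by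
    have hw := shapleyKernel_succ (Nat.zero_le n)
    simp only [zero_add, Nat.choose_zero_right] at hw
    simp only [card_singleton, sum_singleton, hw]
    have : δ j ≠ 0 := hj
    positivity
  refine hsingle.trans_le (single_le_sum
    (f := fun C => shapleyKernel (n + 2) #C * (∑ i ∈ C, δ i) ^ 2) (fun C _ => ?_) (mem_univ _))
  exact mul_nonneg (shapleyKernel_nonneg (by simpa using card_le_univ C)) (sq_nonneg _)

/-- the Shapley values are the unique minimizer of the KernelSHAP
objective under the efficiency constraint. -/
theorem kernelSHAP_unique_minimizer (q : ℕ) (hq : 2 ≤ q)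
    (ν : Finset (Fin q) → ℝ) (hν : ν ∅ = 0) :
    (∑ j, shapley ν j = ν Finset.univ) ∧
    ∀ ψ : Fin q → ℝ, (∑ j, ψ j = ν Finset.univ) → ψ ≠ shapley ν →
      kernelObjective ν (shapley ν) < kernelObjective ν ψ := by
  refine ⟨sum_shapley ν hν, fun ψ hψ hne => ?_⟩
  obtain ⟨n, rfl⟩ : ∃ n, q = n + 2 := ⟨q - 2, by omega⟩
  have hδ : ∑ j, (ψ - shapley ν) j = 0 := by
    simp [sum_sub_distrib, hψ, sum_shapley ν hν]
  have horth : ∑ j, kernelGradient ν (shapley ν) j * (ψ - shapley ν) j = 0 := by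
    simp_rw [kernelGradient_shapley_eq ν _ 0]
    rw [← mul_sum, hδ, mul_zero]
  have hexpand := kernelObjective_add ν (shapley ν) (ψ - shapley ν)
  rw [add_sub_cancel, horth, mul_zero, sub_zero] at hexpand
  rw [hexpand]
  linarith [sum_shapleyKernel_mul_sq_pos (sub_ne_zero.2 hne)]
end

section
/- If the value function ν is a bilinear form given by a matrix A = (a_{j,k}) ∈ ℝ^{q×q}, then its Shapley values are φ_j = ½ · Σ_{k=1}^q (a_{j,k} + a_{k,j}) for every j ∈ Q. -/
open Finset

lemma gauss_sum_real (n : ℕ) : ∑ c ∈ Finset.range n, ((c : ℝ) + 1) = n * (n + 1) / 2 := by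
  induction n with
  | zero => simp
  | succ m ih => rw [Finset.sum_range_succ, ih]; push_cast; ring

lemma sum_inv_choose {α : Type*} [DecidableEq α] (n : ℕ) (s : Finset α) (hs : s.card = n) :
    ∑ C ∈ s.powerset, ((n.choose C.card : ℝ))⁻¹ = n + 1 := by
  rw [Finset.sum_powerset_apply_card (f := fun m => ((n.choose m : ℝ))⁻¹), hs]
  have : ∀ c ∈ Finset.range (n + 1),
      (n.choose c) • ((n.choose c : ℝ))⁻¹ = 1 := by
    intro c hc
    rw [nsmul_eq_mul, mul_inv_cancel₀]
    exact_mod_cast (Nat.choose_pos (Nat.lt_succ_iff.mp (Finset.mem_range.mp hc))).ne'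
  rw [Finset.sum_congr rfl this]
  simp

lemma sum_inv_choose_succ {α : Type*} [DecidableEq α] (n : ℕ) (hn : 1 ≤ n) (s : Finset α)
    (hs : s.card = n - 1) :
    ∑ C ∈ s.powerset, ((n.choose (C.card + 1) : ℝ))⁻¹ = ((n : ℝ) + 1) / 2 := by
  rw [Finset.sum_powerset_apply_card (f := fun m => ((n.choose (m + 1) : ℝ))⁻¹), hs]
  have hn1 : n - 1 + 1 = n := Nat.succ_pred_eq_of_pos hn
  rw [hn1]
  have hnR : (0 : ℝ) < (n : ℝ) := by exact_mod_cast hn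
  have key : ∀ c ∈ Finset.range n,
      ((n - 1).choose c) • ((n.choose (c + 1) : ℝ))⁻¹ = ((c : ℝ) + 1) / n := by
    intro c hc
    have hc' : c + 1 ≤ n := Finset.mem_range.mp hc
    have hch : (0 : ℝ) < (n.choose (c + 1) : ℝ) := by
      exact_mod_cast Nat.choose_pos hc'
    have hid : n * (n - 1).choose c = n.choose (c + 1) * (c + 1) := by
      conv_lhs => rw [← hn1]
      conv_rhs => rw [← hn1]
      exact Nat.add_one_mul_choose_eq (n - 1) c
    have hidR : (n : ℝ) * ((n - 1).choose c : ℝ) = (n.choose (c + 1) : ℝ) * ((c : ℝ) + 1) := by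
      exact_mod_cast hid
    rw [nsmul_eq_mul]
    field_simp
    linarith [hidR]
  rw [Finset.sum_congr rfl key]
  rw [show (∑ c ∈ Finset.range n, ((c : ℝ) + 1) / n)
      = (∑ c ∈ Finset.range n, ((c : ℝ) + 1)) / n from (Finset.sum_div _ _ _).symm]
  rw [gauss_sum_real]
  field_simp

/-- Shapley values of a bilinear value function. -/
theorem shapley_bilinear (q : ℕ) (hq : 1 ≤ q) (A : Fin q → Fin q → ℝ)
    (ν : Finset (Fin q) → ℝ)
    (hν : ∀ C : Finset (Fin q), ν C = ∑ j ∈ C, ∑ k ∈ C, A j k)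
    (j : Fin q) :
    shapley ν j = (1 / 2 : ℝ) * ∑ k, (A j k + A k j) := by
  set n := q - 1 with hn
  have hq' : n + 1 = q := Nat.succ_pred_eq_of_pos hq
  set S : Finset (Fin q) := Finset.univ.erase j with hS
  have hScard : S.card = n := by
    rw [hS, Finset.card_erase_of_mem (Finset.mem_univ j), Finset.card_univ, Fintype.card_fin]
  set B : Fin q → ℝ := fun k => A j k + A k j with hB
  set w : ℕ → ℝ := fun m => ((n.choose m : ℝ))⁻¹ with hw
  -- Step 1: the marginal contribution
  have hdiff : ∀ C ∈ S.powerset, ν (insert j C) - ν C = A j j + ∑ k ∈ C, B k := by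
    intro C hC
    have hjC : j ∉ C := fun h =>
      (Finset.mem_erase.mp (Finset.mem_powerset.mp hC h)).1 rfl
    rw [hν, hν, Finset.sum_insert hjC]
    simp only [Finset.sum_insert hjC, hB, Finset.sum_add_distrib]
    ring
  -- Step 2: rewrite the shapley sum
  have step2 : shapley ν j = (q : ℝ)⁻¹ *
      ∑ C ∈ S.powerset, w C.card * (A j j + ∑ k ∈ C, B k) := by
    unfold shapley
    congr 1
    exact Finset.sum_congr rfl fun C hC => by rw [hdiff C hC]
  -- swap sums
  have swap : ∑ C ∈ S.powerset, w C.card * (∑ k ∈ C, B k)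
      = ∑ k ∈ S, B k * (∑ C ∈ S.powerset, if k ∈ C then w C.card else 0) := by
    have h1 : ∀ C ∈ S.powerset, w C.card * (∑ k ∈ C, B k)
        = ∑ k ∈ S, (if k ∈ C then w C.card else 0) * B k := by
      intro C hC
      have hsub : C ⊆ S := Finset.mem_powerset.mp hC
      rw [Finset.mul_sum]
      symm
      simp only [ite_mul, zero_mul]
      rw [Finset.sum_ite_mem, Finset.inter_eq_right.mpr hsub]
    rw [Finset.sum_congr rfl h1, Finset.sum_comm]
    exact Finset.sum_congr rfl fun k _ => by rw [← Finset.sum_mul, mul_comm]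
  -- constant part
  have hconst : ∑ C ∈ S.powerset, w C.card = q := by
    have := sum_inv_choose n S hScard
    rw [hw]
    rw [this]
    exact_mod_cast congrArg (Nat.cast : ℕ → ℝ) hq'
  -- inner weighted count for each k ∈ S
  have hT : ∀ k ∈ S, (∑ C ∈ S.powerset, if k ∈ C then w C.card else 0) = (q : ℝ) / 2 := by
    intro k hk
    have hkS : S = insert k (S.erase k) := (Finset.insert_erase hk).symm
    have hknotin : k ∉ S.erase k := Finset.notMem_erase k S
    rw [hkS, Finset.sum_powerset_insert hknotin]
    have h0 : (∑ t ∈ (S.erase k).powerset, if k ∈ t then w t.card else 0) = 0 := by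
      refine Finset.sum_eq_zero fun t ht => ?_
      have : k ∉ t := fun h =>
        Finset.notMem_erase k S ((Finset.mem_powerset.mp ht) h)
      simp [this]
    rw [h0, zero_add]
    have h1 : (∑ t ∈ (S.erase k).powerset, if k ∈ insert k t then w (insert k t).card else 0)
        = ∑ t ∈ (S.erase k).powerset, w (t.card + 1) := by
      refine Finset.sum_congr rfl fun t ht => ?_
      have hkt : k ∉ t := fun h =>
        Finset.notMem_erase k S ((Finset.mem_powerset.mp ht) h)
      rw [if_pos (Finset.mem_insert_self k t), Finset.card_insert_of_notMem hkt]
    rw [h1]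
    have hn1 : 1 ≤ n := by
      rcases Nat.eq_zero_or_pos n with h | h
      · exfalso
        have : S = ∅ := Finset.card_eq_zero.mp (hScard.trans h)
        rw [this] at hk; exact absurd hk (Finset.notMem_empty k)
      · exact h
    have hcard : (S.erase k).card = n - 1 := by
      rw [Finset.card_erase_of_mem hk, hScard]
    have := sum_inv_choose_succ n hn1 (S.erase k) hcard
    rw [hw]
    rw [this]
    rw [← hq']
    push_cast
    ring
  -- put it together
  rw [step2]
  have expand : ∑ C ∈ S.powerset, w C.card * (A j j + ∑ k ∈ C, B k)
      = A j j * (∑ C ∈ S.powerset, w C.card)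
        + ∑ C ∈ S.powerset, w C.card * (∑ k ∈ C, B k) := by
    rw [Finset.mul_sum]
    rw [← Finset.sum_add_distrib]
    exact Finset.sum_congr rfl fun C _ => by ring
  rw [expand, hconst, swap, Finset.sum_congr rfl fun k hk => by rw [hT k hk]]
  have hsplit : ∑ k, B k = B j + ∑ k ∈ S, B k := by
    rw [hS]
    exact (Finset.add_sum_erase Finset.univ B (Finset.mem_univ j)).symm
  have hBj : B j = 2 * A j j := by rw [hB]; ring
  have hqR : (0 : ℝ) < (q : ℝ) := by exact_mod_cast hq
  have hfinal : ∑ k ∈ S, B k * ((q : ℝ) / 2) = ((q : ℝ) / 2) * ∑ k ∈ S, B k := by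
    rw [Finset.mul_sum]
    exact Finset.sum_congr rfl fun k _ => mul_comm _ _
  rw [hfinal]
  have : (∑ k, (A j k + A k j)) = ∑ k, B k := rfl
  rw [this, hsplit, hBj]
  field_simp
end

section
/- If the value function ν is a bilinear form given by a matrix A = (a_{j,k}) ∈ ℝ^{q×q}, then for every permutation π of (1,…,q) and every j ∈ Q, the sum of the marginal contributions of j under π and under the reversed permutation ρ(π) is independent of π: (ν(C_{π,j} ∪ {j}) − ν(C_{π,j})) + (ν(C_{ρ(π),j} ∪ {j}) − ν(C_{ρ(π),j})) = Σ_{k=1}^q (a_{j,k} + a_{k,j}). -/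
open Finset

/-- The coalition `C_{π,j}` of players preceding `j` in the permutation `π`,
where `π i` is the player at position `i`. -/
def preceding {q : ℕ} (π : Equiv.Perm (Fin q)) (j : Fin q) : Finset (Fin q) :=
  (Finset.univ.filter (fun i : Fin q => i < π.symm j)).image π

/-- The reversed permutation `ρ(π) = (π_q, …, π_1)`. -/
def reversedPerm {q : ℕ} (π : Equiv.Perm (Fin q)) : Equiv.Perm (Fin q) :=
  Fin.revPerm.trans π

lemma mem_preceding {q : ℕ} (π : Equiv.Perm (Fin q)) (j k : Fin q) :
    k ∈ preceding π j ↔ π.symm k < π.symm j := by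
  simp only [preceding, Finset.mem_image, Finset.mem_filter, Finset.mem_univ, true_and]
  constructor
  · rintro ⟨i, hi, rfl⟩; simpa using hi
  · intro h; exact ⟨π.symm k, h, by simp⟩

lemma mem_preceding_rev {q : ℕ} (π : Equiv.Perm (Fin q)) (j k : Fin q) :
    k ∈ preceding (reversedPerm π) j ↔ π.symm j < π.symm k := by
  rw [mem_preceding]
  have : (reversedPerm π).symm = π.symm.trans Fin.revPerm := rfl
  simp [this, Fin.rev_lt_rev]

lemma marginal {q : ℕ} (A : Fin q → Fin q → ℝ) (j : Fin q) (C : Finset (Fin q))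
    (hj : j ∉ C) :
    (∑ a ∈ insert j C, ∑ b ∈ insert j C, A a b) - (∑ a ∈ C, ∑ b ∈ C, A a b)
      = A j j + ∑ k ∈ C, (A j k + A k j) := by
  rw [Finset.sum_insert hj]
  simp only [Finset.sum_insert hj, Finset.sum_add_distrib]
  ring

/-- for a bilinear value function, the sum of the marginal
contributions of `j` under `π` and under its reversal is independent of `π`. -/
theorem bilinear_paired_marginals (q : ℕ) (hq : 1 ≤ q)
    (A : Fin q → Fin q → ℝ) (ν : Finset (Fin q) → ℝ)
    (hν : ∀ C : Finset (Fin q), ν C = ∑ j ∈ C, ∑ k ∈ C, A j k)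
    (π : Equiv.Perm (Fin q)) (j : Fin q) :
    (ν (insert j (preceding π j)) - ν (preceding π j))
      + (ν (insert j (preceding (reversedPerm π) j))
          - ν (preceding (reversedPerm π) j))
      = ∑ k, (A j k + A k j) := by
  have hj1 : j ∉ preceding π j := by simp [mem_preceding]
  have hj2 : j ∉ preceding (reversedPerm π) j := by simp [mem_preceding_rev]
  have hdisj : Disjoint (preceding π j) (preceding (reversedPerm π) j) := by
    rw [Finset.disjoint_left]
    intro k h1 h2
    rw [mem_preceding] at h1
    rw [mem_preceding_rev] at h2
    exact absurd h2 (not_lt.2 h1.le)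
  have hunion : preceding π j ∪ preceding (reversedPerm π) j = Finset.univ.erase j := by
    ext k
    rw [Finset.mem_union, mem_preceding, mem_preceding_rev, Finset.mem_erase]
    simp only [Finset.mem_univ, and_true]
    constructor
    · rintro (h | h) rfl <;> exact lt_irrefl _ h
    · intro h
      rcases lt_or_gt_of_ne (fun he : π.symm k = π.symm j => h (π.symm.injective he)) with h' | h'
      · exact Or.inl h'
      · exact Or.inr h'
  rw [hν, hν, hν, hν, marginal A j _ hj1, marginal A j _ hj2]
  rw [← Finset.add_sum_erase Finset.univ (fun k => A j k + A k j) (Finset.mem_univ j),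
    ← hunion, Finset.sum_union hdisj]
  ring
end

section
/- Let 1 ≤ d ≤ q and suppose the value function decomposes as ν(C) = Σ_{j ∈ C∩{1,…,d}} Σ_{k ∈ C∩{1,…,d}} a_{j,k} + ν₂(C ∩ {d+1,…,q}) for all C ⊆ Q, where A = (a_{j,k}) ∈ ℝ^{q×q} vanishes outside its upper-left d×d block and ν₂ is a real-valued function on subsets of {d+1,…,q}. Then for every 1 ≤ j ≤ d the Shapley value of ν is φ_j = ½ · Σ_{k=1}^d (a_{j,k} + a_{k,j}). -/
/-!
The Shapley value is linear in the game, and the bilinear part of `ν` is the combination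
`∑ a b, A a b • u_{a,b}` of the pair unanimity games `u_{a,b} C = [a ∈ C ∧ b ∈ C]`. Player `j`
receives `1/2` from `u_{a,b}` for each of `a`, `b` equal to `j`, and nothing from the part of `ν`
depending only on the players from `d` on, for which `j` is a null player. The two weight sums
behind this are `∑_{C ⊆ S} 1 / binom(|S|, |C|) = |S| + 1` (each size contributes `1`) and its
restriction to the `C` containing a fixed `k ∈ S`, which is half of it since `C ↦ S \ C`
exchanges the coalitions containing `k` with those avoiding it.
-/

open Finset

theorem Finset.sum_powerset_sdiff {α M : Type*} [DecidableEq α] [AddCommMonoid M]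
    (S : Finset α) (f : Finset α → M) :
    ∑ C ∈ S.powerset, f (S \ C) = ∑ C ∈ S.powerset, f C :=
  sum_nbij' (S \ ·) (S \ ·) (by simp) (by simp)
    (fun C hC => Finset.sdiff_sdiff_eq_self (mem_powerset.1 hC))
    (fun C hC => Finset.sdiff_sdiff_eq_self (mem_powerset.1 hC)) (fun _ _ => rfl)

theorem Finset.sum_powerset_inv_choose_card {α : Type*} (S : Finset α) :
    ∑ C ∈ S.powerset, ((S.card.choose C.card : ℝ))⁻¹ = S.card + 1 := by
  rw [sum_powerset_apply_card (fun m => ((S.card.choose m : ℝ))⁻¹)]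
  have hterm : ∀ m ∈ range (S.card + 1), S.card.choose m • ((S.card.choose m : ℝ))⁻¹ = 1 :=
    fun m hm => by
      rw [nsmul_eq_mul, mul_inv_cancel₀]
      exact_mod_cast (Nat.choose_pos (Nat.lt_succ_iff.1 (mem_range.1 hm))).ne'
  rw [sum_congr rfl hterm]
  simp

theorem Finset.sum_powerset_filter_mem_inv_choose_card {α : Type*} [DecidableEq α]
    {S : Finset α} {k : α} (hk : k ∈ S) :
    ∑ C ∈ S.powerset with k ∈ C, ((S.card.choose C.card : ℝ))⁻¹ = (S.card + 1) / 2 := by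
  set w : Finset α → ℝ := fun C => ((S.card.choose C.card : ℝ))⁻¹
  have hsymm : ∑ C ∈ S.powerset with k ∈ C, w C = ∑ C ∈ S.powerset with k ∉ C, w C := by
    rw [sum_filter, sum_filter, ← sum_powerset_sdiff]
    refine sum_congr rfl fun C hC => ?_
    have hw : w (S \ C) = w C := by
      simp only [w, card_sdiff_of_subset (mem_powerset.1 hC),
        Nat.choose_symm (card_le_card (mem_powerset.1 hC))]
    simp [hw, hk]
  have htotal := sum_filter_add_sum_filter_not S.powerset (k ∈ ·) w
  rw [sum_powerset_inv_choose_card] at htotal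
  linarith

section Shapley

variable {q : ℕ}

theorem shapley_eq_sum (ν : Finset (Fin q) → ℝ) (j : Fin q) :
    shapley ν j = (((univ.erase j).card : ℝ) + 1)⁻¹ * ∑ C ∈ (univ.erase j).powerset,
      (((univ.erase j).card.choose C.card : ℝ))⁻¹ * (ν (insert j C) - ν C) := by
  have hq : ((q - 1 : ℕ) : ℝ) + 1 = q := by
    rw [Nat.cast_sub (Fin.pos j)]; push_cast; ring
  simp [shapley, hq]

theorem shapley_add (ν μ : Finset (Fin q) → ℝ) (j : Fin q) :
    shapley (fun C => ν C + μ C) j = shapley ν j + shapley μ j := by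
  simp only [shapley, add_sub_add_comm, mul_add, sum_add_distrib]

theorem shapley_const_mul (c : ℝ) (ν : Finset (Fin q) → ℝ) (j : Fin q) :
    shapley (fun C => c * ν C) j = c * shapley ν j := by
  simp only [shapley, ← mul_sub, mul_sum]
  exact sum_congr rfl fun C _ => by ring

theorem shapley_sum {ι : Type*} (s : Finset ι) (ν : ι → Finset (Fin q) → ℝ) (j : Fin q) :
    shapley (fun C => ∑ i ∈ s, ν i C) j = ∑ i ∈ s, shapley (ν i) j := by
  simp only [shapley, ← sum_sub_distrib, mul_sum]
  exact sum_comm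

theorem shapley_eq_of_marginal_eq_const {ν : Finset (Fin q) → ℝ} {j : Fin q} {c : ℝ}
    (h : ∀ C, j ∉ C → ν (insert j C) - ν C = c) : shapley ν j = c := by
  have hmarg : ∀ C ∈ (univ.erase j).powerset, ν (insert j C) - ν C = c :=
    fun C hC => h C fun hj => by simpa using mem_powerset.1 hC hj
  rw [shapley_eq_sum, sum_congr rfl fun C hC => by rw [hmarg C hC], ← sum_mul,
    sum_powerset_inv_choose_card]
  field_simp

theorem shapley_eq_half_of_marginal_eq_indicator {ν : Finset (Fin q) → ℝ} {j k : Fin q}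
    (hkj : k ≠ j) (h : ∀ C, j ∉ C → ν (insert j C) - ν C = if k ∈ C then 1 else 0) :
    shapley ν j = 1 / 2 := by
  have hmarg : ∀ C ∈ (univ.erase j).powerset, ν (insert j C) - ν C = if k ∈ C then 1 else 0 :=
    fun C hC => h C fun hj => by simpa using mem_powerset.1 hC hj
  rw [shapley_eq_sum, sum_congr rfl fun C hC => by rw [hmarg C hC, mul_ite, mul_one, mul_zero],
    ← sum_filter, sum_powerset_filter_mem_inv_choose_card (by simpa using hkj)]
  field_simp

def pairUnanimityGame (a b : Fin q) : Finset (Fin q) → ℝ :=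
  fun C => if a ∈ C ∧ b ∈ C then 1 else 0

theorem shapley_pairUnanimityGame (a b j : Fin q) :
    shapley (pairUnanimityGame a b) j =
      (if a = j then 1 / 2 else 0) + (if b = j then 1 / 2 else 0) := by
  by_cases haj : a = j <;> by_cases hbj : b = j
  · subst haj hbj
    rw [shapley_eq_of_marginal_eq_const (c := 1) fun C hC => by simp [pairUnanimityGame, hC]]
    norm_num
  · subst haj
    rw [shapley_eq_half_of_marginal_eq_indicator hbj fun C hC => by
      simp [pairUnanimityGame, hC, hbj]]
    simp [hbj]
  · subst hbj
    rw [shapley_eq_half_of_marginal_eq_indicator haj fun C hC => by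
      simp [pairUnanimityGame, hC, haj]]
    simp [haj]
  · rw [shapley_eq_of_marginal_eq_const (c := 0) fun C _ => by
      simp [pairUnanimityGame, haj, hbj]]
    simp [haj, hbj]

end Shapley

theorem shapley_bilinear_plus_general_general (q d : ℕ)
    (A : Fin q → Fin q → ℝ)
    (ν ν₂ : Finset (Fin q) → ℝ)
    (hν : ∀ C : Finset (Fin q),
      ν C = (∑ j ∈ C.filter (fun i : Fin q => (i : ℕ) < d),
               ∑ k ∈ C.filter (fun i : Fin q => (i : ℕ) < d), A j k)
        + ν₂ (C.filter (fun i : Fin q => d ≤ (i : ℕ))))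
    (j : Fin q) (hj : (j : ℕ) < d) :
    shapley ν j
      = (1 / 2 : ℝ) * ∑ k ∈ Finset.univ.filter (fun i : Fin q => (i : ℕ) < d),
          (A j k + A k j) := by
  set D := univ.filter fun i : Fin q => (i : ℕ) < d
  have hjD : j ∈ D := by simp [D, hj]
  have hν' : ν = fun C => (∑ a ∈ D, ∑ b ∈ D, A a b * pairUnanimityGame a b C) +
      ν₂ (C.filter fun i => d ≤ (i : ℕ)) := by
    funext C
    have hCD : C.filter (fun i : Fin q => (i : ℕ) < d) = D.filter (· ∈ C) := by
      ext; simp [D, and_comm]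
    simp only [hν, hCD, sum_filter, pairUnanimityGame, mul_ite, mul_one, mul_zero, ite_and,
      sum_ite_irrel, sum_const_zero]
  have hnull : shapley (fun C => ν₂ (C.filter fun i => d ≤ (i : ℕ))) j = 0 :=
    shapley_eq_of_marginal_eq_const fun C _ => by simp [filter_insert, not_le.2 hj]
  rw [hν', shapley_add, hnull, add_zero]
  simp only [shapley_sum, shapley_const_mul, shapley_pairUnanimityGame, mul_add, mul_ite,
    mul_zero, sum_add_distrib, sum_ite_irrel, sum_const_zero, sum_ite_eq', if_pos hjD, ← sum_mul]
  ring

/-- if the value function is a bilinear form in the first `d`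
components plus a general term in the remaining components, the Shapley values
of the first `d` players are given by the bilinear formula. -/
theorem shapley_bilinear_plus_general (q d : ℕ) (hd1 : 1 ≤ d) (hd2 : d ≤ q)
    (A : Fin q → Fin q → ℝ)
    (hA : ∀ j k : Fin q, (d ≤ (j : ℕ) ∨ d ≤ (k : ℕ)) → A j k = 0)
    (ν ν₂ : Finset (Fin q) → ℝ)
    (hν : ∀ C : Finset (Fin q),
      ν C = (∑ j ∈ C.filter (fun i : Fin q => (i : ℕ) < d),
               ∑ k ∈ C.filter (fun i : Fin q => (i : ℕ) < d), A j k)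
        + ν₂ (C.filter (fun i : Fin q => d ≤ (i : ℕ))))
    (j : Fin q) (hj : (j : ℕ) < d) :
    shapley ν j
      = (1 / 2 : ℝ) * ∑ k ∈ Finset.univ.filter (fun i : Fin q => (i : ℕ) < d),
          (A j k + A k j) :=
  shapley_bilinear_plus_general_general q d A ν ν₂ hν j hj
end

section
/- Let (A_k)_{k=1,…,K} be a partition of Q into nonempty sets and suppose ν(C) = Σ_{k=1}^K ν_k(C ∩ A_k) for all C ⊆ Q, where each ν_k is a real-valued function on subsets of Q. Then for every single permutation π of (1,…,q) (without pairing) and every 1 ≤ k ≤ K, the group sum of marginal contributions telescopes: Σ_{j ∈ A_k} (ν(C_{π,j} ∪ {j}) − ν(C_{π,j})) = ν_k(A_k) − ν_k(∅). -/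
open Finset

/-!
Only the block `A_k` containing `j` sees the marginal contribution of `j`, so the group sum
equals the sum of the marginal contributions of `ν_k (· ∩ A_k)` over `A_k`, and extending it to all
players adds only zeros. Along a permutation, the coalitions `C_{π,j}` and `C_{π,j} ∪ {j}` are
consecutive prefixes, so the sum of marginal contributions of any set function over all players
telescopes to its value on `Q` minus its value on `∅`.
-/

open Function

theorem marginal_eq_of_eq_sum_inter {α ι : Type*} [DecidableEq α] [Fintype ι]
    {A : ι → Finset α} (hA : Pairwise (Disjoint on A))
    {ν : Finset α → ℝ} {νk : ι → Finset α → ℝ} (hν : ∀ C, ν C = ∑ k, νk k (C ∩ A k))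
    {k : ι} {j : α} (hj : j ∈ A k) (C : Finset α) :
    ν (insert j C) - ν C = νk k (insert j C ∩ A k) - νk k (C ∩ A k) := by
  rw [hν, hν, ← sum_sub_distrib, sum_eq_single k _ (by simp)]
  intro l _ hlk
  have hjl : j ∉ A l := disjoint_right.mp (hA hlk) hj
  rw [insert_inter_of_notMem hjl, sub_self]

section Preceding

variable {q : ℕ} (π : Equiv.Perm (Fin q))

theorem preceding_apply (i : Fin q) :
    preceding π (π i) = univ.filter fun x => (π.symm x : ℕ) < i := by
  ext x
  simp only [preceding, mem_image, mem_filter, mem_univ, true_and, Equiv.symm_apply_apply]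
  constructor
  · rintro ⟨y, hy, rfl⟩
    simpa using hy
  · exact fun hx => ⟨π.symm x, hx, π.apply_symm_apply x⟩

theorem insert_preceding_apply (i : Fin q) :
    insert (π i) (preceding π (π i)) = univ.filter fun x => (π.symm x : ℕ) < i + 1 := by
  ext x
  rw [mem_insert, preceding_apply, mem_filter, mem_filter, Nat.lt_succ_iff_lt_or_eq,
    Fin.val_inj, π.symm_apply_eq]
  simp only [mem_univ, true_and, or_comm]

theorem sum_marginal_preceding (f : Finset (Fin q) → ℝ) :
    ∑ j, (f (insert j (preceding π j)) - f (preceding π j)) = f univ - f ∅ := by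
  set g : ℕ → ℝ := fun t => f (univ.filter fun x => (π.symm x : ℕ) < t) with hg
  calc ∑ j, (f (insert j (preceding π j)) - f (preceding π j))
      = ∑ i : Fin q, (g (i + 1) - g i) := by
        rw [← Equiv.sum_comp π]
        refine sum_congr rfl fun i _ => ?_
        rw [insert_preceding_apply, preceding_apply]
    _ = ∑ i ∈ range q, (g (i + 1) - g i) := Fin.sum_univ_eq_sum_range (fun i => g (i + 1) - g i) q
    _ = g q - g 0 := sum_range_sub g q
    _ = f univ - f ∅ := by simp [hg]

end Preceding

theorem single_permutation_group_telescope_general (q K : ℕ)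
    (𝒜 : Fin K → Finset (Fin q))
    (hdisj : ∀ k l, k ≠ l → Disjoint (𝒜 k) (𝒜 l))
    (ν : Finset (Fin q) → ℝ) (νk : Fin K → Finset (Fin q) → ℝ)
    (hν : ∀ C : Finset (Fin q), ν C = ∑ k, νk k (C ∩ 𝒜 k))
    (π : Equiv.Perm (Fin q)) (k : Fin K) :
    ∑ j ∈ 𝒜 k, (ν (insert j (preceding π j)) - ν (preceding π j))
      = νk k (𝒜 k) - νk k ∅ := by
  set g : Finset (Fin q) → ℝ := fun C => νk k (C ∩ 𝒜 k)
  calc ∑ j ∈ 𝒜 k, (ν (insert j (preceding π j)) - ν (preceding π j))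
      = ∑ j ∈ 𝒜 k, (g (insert j (preceding π j)) - g (preceding π j)) :=
        sum_congr rfl fun j hj =>
          marginal_eq_of_eq_sum_inter (fun k l h => hdisj k l h) hν hj (preceding π j)
    _ = ∑ j, (g (insert j (preceding π j)) - g (preceding π j)) :=
        sum_subset (subset_univ _) fun j _ hj => by
          simp only [g, insert_inter_of_notMem hj, sub_self]
    _ = νk k (𝒜 k) - νk k ∅ := by
        rw [sum_marginal_preceding]
        simp [g]

/-- telescoping of the group sum of marginal contributions for a
single permutation under an additive decomposition of the value function. -/
theorem single_permutation_group_telescope (q K : ℕ) (hq : 1 ≤ q)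
    (𝒜 : Fin K → Finset (Fin q))
    (hne : ∀ k, (𝒜 k).Nonempty)
    (hdisj : ∀ k l, k ≠ l → Disjoint (𝒜 k) (𝒜 l))
    (hcover : Finset.univ.biUnion 𝒜 = (Finset.univ : Finset (Fin q)))
    (ν : Finset (Fin q) → ℝ) (νk : Fin K → Finset (Fin q) → ℝ)
    (hν : ∀ C : Finset (Fin q), ν C = ∑ k, νk k (C ∩ 𝒜 k))
    (π : Equiv.Perm (Fin q)) (k : Fin K) :
    ∑ j ∈ 𝒜 k, (ν (insert j (preceding π j)) - ν (preceding π j))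
      = νk k (𝒜 k) - νk k ∅ :=
  single_permutation_group_telescope_general q K 𝒜 hdisj ν νk hν π k
end

section
/- Let (A_k)_{k=1,…,K} be a partition of Q into nonempty sets and suppose ν(C) = Σ_{k=1}^K ν_k(C ∩ A_k) for all C ⊆ Q, where each ν_k is a real-valued function on subsets of Q. Then the Shapley values of ν satisfy the group efficiency property Σ_{j ∈ A_k} φ_j = ν_k(A_k) − ν_k(∅) for every 1 ≤ k ≤ K. -/
open Finset

lemma coeff_zero (q s : ℕ) (h1 : 1 ≤ s) (h2 : s ≤ q - 1) :
    (s : ℝ) * (((q-1).choose (s-1) : ℝ))⁻¹ - ((q : ℝ) - s) * (((q-1).choose s : ℝ))⁻¹ = 0 := by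
  have hq : 1 ≤ q := le_trans h1 (le_trans h2 (Nat.sub_le q 1))
  have hc1 : (q-1).choose (s-1) ≠ 0 := (Nat.choose_pos (show s-1 ≤ q-1 by omega)).ne'
  have hc2 : (q-1).choose s ≠ 0 := (Nat.choose_pos h2).ne'
  have key : (q-1).choose s * s = (q-1).choose (s-1) * (q - s) := by
    have := Nat.choose_succ_right_eq (q-1) (s-1)
    have e1 : s - 1 + 1 = s := by omega
    have e2 : q - 1 - (s - 1) = q - s := by omega
    rw [e1, e2] at this
    exact this
  have hs : (q : ℝ) - s = ((q - s : ℕ) : ℝ) := by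
    have : s ≤ q := by omega
    push_cast [this]; ring
  rw [hs, sub_eq_zero]
  have hc1' : ((q-1).choose (s-1) : ℝ) ≠ 0 := Nat.cast_ne_zero.mpr hc1
  have hc2' : ((q-1).choose s : ℝ) ≠ 0 := Nat.cast_ne_zero.mpr hc2
  rw [inv_eq_one_div, inv_eq_one_div, mul_one_div, mul_one_div,
    div_eq_div_iff hc1' hc2']
  have key' : s * (q-1).choose s = (q - s) * (q-1).choose (s-1) := by
    rw [mul_comm, key, mul_comm]
  exact_mod_cast key'

lemma shapley_eff {q : ℕ} (hq : 1 ≤ q) (ν : Finset (Fin q) → ℝ) :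
    ∑ j, shapley ν j = ν Finset.univ - ν ∅ := by
  have hq' : (q : ℝ) ≠ 0 := by positivity
  unfold shapley
  rw [← Finset.mul_sum]
  set w : ℕ → ℝ := fun s => (((q-1).choose s : ℝ))⁻¹ with hw
  -- split the inner difference
  have split : ∀ j : Fin q, ∑ C ∈ (Finset.univ.erase j).powerset,
      w C.card * (ν (insert j C) - ν C)
      = (∑ C ∈ (Finset.univ.erase j).powerset, w C.card * ν (insert j C))
        - ∑ C ∈ (Finset.univ.erase j).powerset, w C.card * ν C := by
    intro j
    rw [← Finset.sum_sub_distrib]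
    exact Finset.sum_congr rfl (fun C _ => by ring)
  rw [Finset.sum_congr rfl (fun j _ => split j), Finset.sum_sub_distrib]
  -- positive part
  have hP : ∀ j : Fin q, ∑ C ∈ (Finset.univ.erase j).powerset, w C.card * ν (insert j C)
      = ∑ S ∈ Finset.univ.powerset.filter (fun S => j ∈ S), w (S.card - 1) * ν S := by
    intro j
    refine Finset.sum_bij' (fun C _ => insert j C) (fun S _ => S.erase j) ?_ ?_ ?_ ?_ ?_
    · intro C hC
      simp only [Finset.mem_powerset, Finset.mem_filter] at *
      exact ⟨Finset.subset_univ _, Finset.mem_insert_self _ _⟩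
    · intro S hS
      simp only [Finset.mem_powerset, Finset.mem_filter] at *
      exact Finset.erase_subset_erase _ (Finset.subset_univ _)
    · intro C hC
      simp only [Finset.mem_powerset] at hC
      have : j ∉ C := fun h => (Finset.mem_erase.mp (hC h)).1 rfl
      exact Finset.erase_insert this
    · intro S hS
      simp only [Finset.mem_filter] at hS
      exact Finset.insert_erase hS.2
    · intro C hC
      simp only [Finset.mem_powerset] at hC
      have hj : j ∉ C := fun h => (Finset.mem_erase.mp (hC h)).1 rfl
      rw [Finset.card_insert_of_notMem hj]
      simp
  rw [Finset.sum_congr rfl (fun j _ => hP j)]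
  have hP2 : ∑ j : Fin q, ∑ S ∈ Finset.univ.powerset.filter (fun S => j ∈ S),
      w (S.card - 1) * ν S = ∑ S ∈ (Finset.univ : Finset (Fin q)).powerset, ∑ j ∈ S,
      w (S.card - 1) * ν S := by
    apply Finset.sum_comm'
    intro j S
    simp [Finset.mem_filter, and_comm]
  have hN : ∑ j : Fin q, ∑ C ∈ (Finset.univ.erase j).powerset, w C.card * ν C
      = ∑ C ∈ (Finset.univ : Finset (Fin q)).powerset, ∑ j ∈ Cᶜ, w C.card * ν C := by
    apply Finset.sum_comm'
    intro j C
    simp only [Finset.mem_univ, true_and, Finset.mem_powerset, Finset.mem_compl,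
      Finset.subset_erase, and_iff_right (Finset.subset_univ C), iff_self_and]
    exact fun _ => Finset.subset_univ C
  rw [hP2, hN, ← Finset.sum_sub_distrib]
  have hterm : ∀ S ∈ (Finset.univ : Finset (Fin q)).powerset,
      (∑ j ∈ S, w (S.card - 1) * ν S) - ∑ j ∈ Sᶜ, w S.card * ν S
      = ((S.card : ℝ) * w (S.card - 1) - ((q:ℝ) - S.card) * w S.card) * ν S := by
    intro S _
    rw [Finset.sum_const, Finset.sum_const, Finset.card_compl]
    have : (Fintype.card (Fin q) - S.card : ℕ) = q - S.card := by simp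
    rw [this, nsmul_eq_mul, nsmul_eq_mul]
    have hcard : S.card ≤ q := by
      simpa using Finset.card_le_card (Finset.subset_univ S)
    have : ((q - S.card : ℕ) : ℝ) = (q : ℝ) - S.card := by
      push_cast [hcard]; ring
    rw [this]; ring
  rw [Finset.sum_congr rfl hterm]
  -- only ∅ and univ contribute
  have huniv_ne : (Finset.univ : Finset (Fin q)) ≠ ∅ := by
    simp [Finset.univ_eq_empty_iff, ← Fin.pos_iff_nonempty]
    omega
  have hsub : ({Finset.univ, ∅} : Finset (Finset (Fin q))) ⊆ Finset.univ.powerset := by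
    intro S hS
    simp only [Finset.mem_insert, Finset.mem_singleton] at hS
    rcases hS with h | h <;> simp [h]
  rw [← Finset.sum_subset hsub ?zero]
  case zero =>
    intro S _ hS
    simp only [Finset.mem_insert, Finset.mem_singleton, not_or] at hS
    have h1 : 1 ≤ S.card := Finset.card_pos.mpr (Finset.nonempty_iff_ne_empty.mpr hS.2)
    have h2 : S.card ≤ q - 1 := by
      have : S.card < q := by
        have := Finset.card_lt_card (lt_of_le_of_ne (Finset.subset_univ S) hS.1)
        simpa using this
      omega
    rw [hw]
    rw [coeff_zero q S.card h1 h2, zero_mul]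
  rw [Finset.sum_pair huniv_ne]
  have hcu : (Finset.univ : Finset (Fin q)).card = q := by simp
  rw [hcu]
  simp only [Finset.card_empty, hw]
  rw [Nat.choose_self, Nat.choose_zero_right]
  push_cast
  field_simp
  ring

lemma shapley_null {q : ℕ} (ν : Finset (Fin q) → ℝ) (j : Fin q)
    (h : ∀ C, ν (insert j C) = ν C) : shapley ν j = 0 := by
  unfold shapley
  rw [Finset.sum_eq_zero (fun C _ => by rw [h C]; ring)]
  ring


/-- group efficiency of Shapley values under an additive
decomposition of the value function. -/
theorem shapley_group_efficiency (q K : ℕ) (hq : 1 ≤ q)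
    (𝒜 : Fin K → Finset (Fin q))
    (hne : ∀ k, (𝒜 k).Nonempty)
    (hdisj : ∀ k l, k ≠ l → Disjoint (𝒜 k) (𝒜 l))
    (hcover : Finset.univ.biUnion 𝒜 = (Finset.univ : Finset (Fin q)))
    (ν : Finset (Fin q) → ℝ) (νk : Fin K → Finset (Fin q) → ℝ)
    (hν : ∀ C : Finset (Fin q), ν C = ∑ k, νk k (C ∩ 𝒜 k))
    (k : Fin K) :
    ∑ j ∈ 𝒜 k, shapley ν j = νk k (𝒜 k) - νk k ∅ := by
  set μ : Finset (Fin q) → ℝ := fun C => νk k (C ∩ 𝒜 k) with hμ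
  have step1 : ∀ j ∈ 𝒜 k, shapley ν j = shapley μ j := by
    intro j hj
    unfold shapley
    congr 1
    apply Finset.sum_congr rfl
    intro C _
    congr 1
    rw [hν, hν, ← Finset.sum_sub_distrib]
    rw [Finset.sum_eq_single k]
    · intro l _ hl
      have hjl : j ∉ 𝒜 l := fun h =>
        (Finset.disjoint_left.mp (hdisj k l (Ne.symm hl))) hj h
      rw [Finset.insert_inter_of_notMem hjl, sub_self]
    · intro h; exact absurd (Finset.mem_univ k) h
  have step2 : ∀ j : Fin q, j ∉ 𝒜 k → shapley μ j = 0 := by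
    intro j hj
    apply shapley_null
    intro C
    rw [hμ]
    simp only
    rw [Finset.insert_inter_of_notMem hj]
  calc ∑ j ∈ 𝒜 k, shapley ν j = ∑ j ∈ 𝒜 k, shapley μ j :=
        Finset.sum_congr rfl step1
    _ = ∑ j : Fin q, shapley μ j := by
        rw [← Finset.sum_subset (Finset.subset_univ (𝒜 k))]
        intro x _ hx
        exact step2 x hx
    _ = μ Finset.univ - μ ∅ := shapley_eff hq μ
    _ = νk k (𝒜 k) - νk k ∅ := by rw [hμ]; simp
end

section
/- Assume q ≥ 2 and ν(∅) = 0. Then the (q−1)×(q−1) matrix I − ¼·I₂ is positive semidefinite, where I = E_{Z∼p}[(ν(Z) − Z_q ν(1) − W(Z)ᵀ φ̃)² · W(Z)W(Z)ᵀ] and I₂ = E_{Z∼p}[4·((ν(Z) + ν(1) − ν(1−Z))/2 − Z_q ν(1) − W(Z)ᵀ φ̃)² · W(Z)W(Z)ᵀ]. -/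
open Finset

/-- The set of nonempty proper coalitions of `Fin q`. -/
def properCoalitions (q : ℕ) : Finset (Finset (Fin q)) :=
  Finset.univ.powerset.filter
    (fun C : Finset (Fin q) => C.Nonempty ∧ C ≠ Finset.univ)

/-- Shapley kernel weight of a coalition. -/
noncomputable def kernelWeight (q : ℕ) (C : Finset (Fin q)) : ℝ :=
  ((q : ℝ) - 1) /
    ((q.choose C.card : ℝ) * (C.card : ℝ) * ((q : ℝ) - (C.card : ℝ)))

/-- Normalized Shapley kernel probability weights. -/
noncomputable def kernelProb (q : ℕ) (C : Finset (Fin q)) : ℝ :=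
  kernelWeight q C / ∑ C' ∈ properCoalitions q, kernelWeight q C'

/-- The last player `q` (index `q - 1` in `Fin q`). -/
def lastPlayer (q : ℕ) (hq : 2 ≤ q) : Fin q := ⟨q - 1, by omega⟩

/-- Indicator `Z_q` of the last player belonging to the coalition `C`. -/
noncomputable def Zlast (q : ℕ) (hq : 2 ≤ q) (C : Finset (Fin q)) : ℝ :=
  if lastPlayer q hq ∈ C then 1 else 0

/-- The vector `W(Z) = Z̃ - Z_q · 1̃ ∈ ℝ^{q-1}` for the coalition `C` with
indicator vector `Z`. -/
noncomputable def Wvec (q : ℕ) (hq : 2 ≤ q) (C : Finset (Fin q))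
    (i : Fin (q - 1)) : ℝ :=
  (if Fin.castLE (Nat.sub_le q 1) i ∈ C then (1 : ℝ) else 0) - Zlast q hq C

/-- The first `q - 1` Shapley values `φ̃ ∈ ℝ^{q-1}`. -/
noncomputable def shapleyTrunc (q : ℕ) (ν : Finset (Fin q) → ℝ)
    (i : Fin (q - 1)) : ℝ :=
  shapley ν (Fin.castLE (Nat.sub_le q 1) i)

/-- The shapResidual `ν(Z) - Z_q ν(1) - W(Z)ᵀ φ̃`. -/
noncomputable def shapResidual (q : ℕ) (hq : 2 ≤ q) (ν : Finset (Fin q) → ℝ)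
    (C : Finset (Fin q)) : ℝ :=
  ν C - Zlast q hq C * ν Finset.univ
    - ∑ i, Wvec q hq C i * shapleyTrunc q ν i

/-- The paired shapResidual `(ν(Z) + ν(1) - ν(1 - Z))/2 - Z_q ν(1) - W(Z)ᵀ φ̃`. -/
noncomputable def pairedResidual (q : ℕ) (hq : 2 ≤ q) (ν : Finset (Fin q) → ℝ)
    (C : Finset (Fin q)) : ℝ :=
  (ν C + ν Finset.univ - ν (Finset.univ \ C)) / 2
    - Zlast q hq C * ν Finset.univ
    - ∑ i, Wvec q hq C i * shapleyTrunc q ν i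

/-- The matrix `ℐ = E_{Z ∼ p}[(ν(Z) - Z_q ν(1) - W(Z)ᵀφ̃)² W(Z) W(Z)ᵀ]`. -/
noncomputable def Imat (q : ℕ) (hq : 2 ≤ q) (ν : Finset (Fin q) → ℝ) :
    Matrix (Fin (q - 1)) (Fin (q - 1)) ℝ :=
  ∑ C ∈ properCoalitions q, kernelProb q C •
    Matrix.of (fun a b =>
      (shapResidual q hq ν C) ^ 2 * (Wvec q hq C a * Wvec q hq C b))

/-- The matrix `ℐ₂` built from the paired residuals (with factor `4`). -/
noncomputable def I2mat (q : ℕ) (hq : 2 ≤ q) (ν : Finset (Fin q) → ℝ) :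
    Matrix (Fin (q - 1)) (Fin (q - 1)) ℝ :=
  ∑ C ∈ properCoalitions q, kernelProb q C •
    Matrix.of (fun a b =>
      4 * (pairedResidual q hq ν C) ^ 2 * (Wvec q hq C a * Wvec q hq C b))

/-!
Complementation `C ↦ Cᶜ` is an involution of the nonempty proper coalitions which preserves the
kernel weights and flips the sign of `W`, so `W Wᵀ` is invariant, and the paired residual is
`ρ(C) = (r(C) - r(Cᶜ)) / 2` in terms of the residual `r`. Averaging the coefficient
`p (r² - ρ²)` of `W Wᵀ` in `ℐ - ¼ ℐ₂` over `C` and `Cᶜ` turns it into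
`p ((r(C) + r(Cᶜ)) / 2)² ≥ 0`, so `ℐ - ¼ ℐ₂` is a nonnegative combination of the positive
semidefinite matrices `W Wᵀ`.
-/

open Matrix

section

variable {q : ℕ}

lemma compl_mem_properCoalitions {C : Finset (Fin q)} (hC : C ∈ properCoalitions q) :
    Cᶜ ∈ properCoalitions q := by
  simp only [properCoalitions, mem_filter, mem_powerset, subset_univ, true_and] at hC ⊢
  rw [nonempty_iff_ne_empty, Ne, compl_eq_empty_iff, compl_ne_univ_iff_nonempty]
  exact hC.symm

lemma sum_properCoalitions_compl {M : Type*} [AddCommMonoid M] (f : Finset (Fin q) → M) :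
    ∑ C ∈ properCoalitions q, f Cᶜ = ∑ C ∈ properCoalitions q, f C :=
  sum_nbij' compl compl (fun _ => compl_mem_properCoalitions) (fun _ => compl_mem_properCoalitions)
    (fun C _ => compl_compl C) (fun C _ => compl_compl C) (fun _ _ => rfl)

lemma sum_properCoalitions_smul_eq_average {M : Type*} [AddCommGroup M] [Module ℝ M]
    (g : Finset (Fin q) → ℝ) {A : Finset (Fin q) → M} (hA : ∀ C, A Cᶜ = A C) :
    ∑ C ∈ properCoalitions q, g C • A C
      = ∑ C ∈ properCoalitions q, ((g C + g Cᶜ) / 2) • A C := by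
  have hsum := sum_properCoalitions_compl fun C => g C • A C
  simp only [hA] at hsum
  simp only [div_eq_inv_mul, mul_smul, add_smul, ← smul_sum, sum_add_distrib, hsum]
  rw [← two_smul ℝ, smul_smul, inv_mul_cancel₀ two_ne_zero, one_smul]

lemma kernelWeight_compl (C : Finset (Fin q)) : kernelWeight q Cᶜ = kernelWeight q C := by
  have hle : C.card ≤ q := by simpa using card_le_univ C
  rw [kernelWeight, kernelWeight, card_compl, Fintype.card_fin, Nat.choose_symm hle,
    Nat.cast_sub hle]
  ring

lemma kernelProb_compl (C : Finset (Fin q)) : kernelProb q Cᶜ = kernelProb q C := by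
  rw [kernelProb, kernelProb, kernelWeight_compl]

lemma kernelWeight_nonneg (hq : 1 ≤ q) (C : Finset (Fin q)) : 0 ≤ kernelWeight q C := by
  have hle : (C.card : ℝ) ≤ q := by exact_mod_cast (by simpa using card_le_univ C)
  have hq' : (1 : ℝ) ≤ q := by exact_mod_cast hq
  exact div_nonneg (by linarith) (mul_nonneg (by positivity) (by linarith))

lemma kernelProb_nonneg (hq : 1 ≤ q) (C : Finset (Fin q)) : 0 ≤ kernelProb q C :=
  div_nonneg (kernelWeight_nonneg hq C) (sum_nonneg fun C' _ => kernelWeight_nonneg hq C')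

variable (hq : 2 ≤ q)

lemma Zlast_compl (C : Finset (Fin q)) : Zlast q hq Cᶜ = 1 - Zlast q hq C := by
  by_cases h : lastPlayer q hq ∈ C <;> simp [Zlast, h]

lemma Wvec_compl (C : Finset (Fin q)) : Wvec q hq Cᶜ = -Wvec q hq C := by
  ext i
  by_cases h : Fin.castLE (Nat.sub_le q 1) i ∈ C <;> simp [Wvec, Zlast_compl, h]

lemma vecMulVec_Wvec_compl (C : Finset (Fin q)) :
    vecMulVec (Wvec q hq Cᶜ) (Wvec q hq Cᶜ) = vecMulVec (Wvec q hq C) (Wvec q hq C) := by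
  rw [Wvec_compl, neg_vecMulVec, vecMulVec_neg, neg_neg]

lemma pairedResidual_eq_half_sub (ν : Finset (Fin q) → ℝ) (C : Finset (Fin q)) :
    pairedResidual q hq ν C = (shapResidual q hq ν C - shapResidual q hq ν Cᶜ) / 2 := by
  simp only [pairedResidual, shapResidual, ← compl_eq_univ_sdiff, Zlast_compl, Wvec_compl,
    Pi.neg_apply, neg_mul, sum_neg_distrib]
  ring

lemma Imat_sub_quarter_I2mat_eq_sum (ν : Finset (Fin q) → ℝ) :
    Imat q hq ν - (1 / 4 : ℝ) • I2mat q hq ν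
      = ∑ C ∈ properCoalitions q,
          (kernelProb q C * (shapResidual q hq ν C ^ 2 - pairedResidual q hq ν C ^ 2)) •
            vecMulVec (Wvec q hq C) (Wvec q hq C) := by
  ext a b
  simp only [Imat, I2mat, Matrix.sub_apply, Matrix.smul_apply, Matrix.sum_apply, of_apply,
    vecMulVec_apply, smul_eq_mul, mul_sum, ← sum_sub_distrib]
  exact sum_congr rfl fun C _ => by ring

end

theorem Imat_sub_quarter_I2mat_posSemidef_general (q : ℕ) (hq : 2 ≤ q)
    (ν : Finset (Fin q) → ℝ) :
    (Imat q hq ν - (1 / 4 : ℝ) • I2mat q hq ν).PosSemidef := by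
  rw [Imat_sub_quarter_I2mat_eq_sum,
    sum_properCoalitions_smul_eq_average _ (vecMulVec_Wvec_compl hq)]
  refine posSemidef_sum _ fun C _ => (posSemidef_vecMulVec_self_star _).smul ?_
  set r := shapResidual q hq ν
  have hcoeff : (kernelProb q C * (r C ^ 2 - pairedResidual q hq ν C ^ 2)
      + kernelProb q Cᶜ * (r Cᶜ ^ 2 - pairedResidual q hq ν Cᶜ ^ 2)) / 2
      = kernelProb q C * ((r C + r Cᶜ) / 2) ^ 2 := by
    rw [pairedResidual_eq_half_sub, pairedResidual_eq_half_sub, compl_compl, kernelProb_compl]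
    ring
  rw [hcoeff]
  exact mul_nonneg (kernelProb_nonneg (by omega) C) (sq_nonneg _)

/-- the matrix `ℐ - ¼ ℐ₂` is positive semidefinite. -/
theorem Imat_sub_quarter_I2mat_posSemidef (q : ℕ) (hq : 2 ≤ q)
    (ν : Finset (Fin q) → ℝ) (hν : ν ∅ = 0) :
    (Imat q hq ν - (1 / 4 : ℝ) • I2mat q hq ν).PosSemidef :=
  Imat_sub_quarter_I2mat_posSemidef_general q hq ν
end
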